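/- Let n ≥ 3 and i ∈ [n−2]. The image of the map inv_i on the alternating group A_n (viewed inside B_n) is exactly the set {0, 1, ..., n−i}. -/
import Mathlib


/-- A signed permutation `π` of `[n]`: `π(i) = ε i · σ(i)` with `σ` a permutation
of `[n]` and signs `ε i ∈ {±1}`.  Positions are encoded by `Fin n`
(position `i ∈ [n]` corresponds to `⟨i-1, _⟩ : Fin n`). -/
structure SignedPerm (n : ℕ) where
  σ : Equiv.Perm (Fin n)
  ε : Fin n → ℤ
  hε : ∀ i, ε i = 1 ∨ ε i = -1

namespace SignedPerm

variable {n : ℕ}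

/-- The signed value `π(i) = ε i · σ(i) ∈ {-n, …, -1, 1, …, n}` (1-based value). -/
def val (π : SignedPerm n) (i : Fin n) : ℤ :=
  π.ε i * ((π.σ i : ℕ) + 1)

/-- The standard basis vector `e i` of `ℝ^n`. -/
def e (i : Fin n) : Fin n → ℝ := Pi.single i 1

/-- The action of a signed permutation on `ℝ^n`, determined by
`π · e i = ε i · e (σ i)`. -/
def act (π : SignedPerm n) (v : Fin n → ℝ) : Fin n → ℝ :=
  fun j => (π.ε (π.σ.symm j) : ℝ) * v (π.σ.symm j)

/-- The positive root system `Φₙ⁺ = {e k, e i + e j, e i - e j : k, i < j}` of `Bₙ`. -/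
def PhiPos (n : ℕ) : Set (Fin n → ℝ) :=
  {v | (∃ k : Fin n, v = e k) ∨ ∃ i j : Fin n, i < j ∧ (v = e i + e j ∨ v = e i - e j)}

/-- The positive roots `Φₙ,ᵢ⁺ = {e i, e i + e j, e i - e j : i < j ≤ n}`. -/
def PhiPosI (n : ℕ) (i : Fin n) : Set (Fin n → ℝ) :=
  {v | v = e i ∨ ∃ j : Fin n, i < j ∧ (v = e i + e j ∨ v = e i - e j)}

/-- The `i`-inversion number `invᵢ π = #{v ∈ Φₙ,ᵢ⁺ : π · v ∈ -Φₙ⁺}`. -/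
noncomputable def invi (i : Fin n) (π : SignedPerm n) : ℕ :=
  Set.ncard {v | v ∈ PhiPosI n i ∧ -(π.act v) ∈ PhiPos n}

/-- The inversion number `inv π = #{v ∈ Φₙ⁺ : π · v ∈ -Φₙ⁺}`. -/
noncomputable def inv (π : SignedPerm n) : ℕ :=
  Set.ncard {v | v ∈ PhiPos n ∧ -(π.act v) ∈ PhiPos n}

end SignedPerm

namespace SignedPerm

open Finset

variable {n : ℕ}

lemma e_apply (a b : Fin n) : e a b = if b = a then 1 else 0 := by
  simp [e, Pi.single_apply]

lemma exists_eq_one_of_mem_phiPos {w : Fin n → ℝ} (hw : w ∈ PhiPos n) : ∃ k, w k = 1 := by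
  rcases hw with ⟨k, rfl⟩ | ⟨a, b, hab, rfl | rfl⟩
  · exact ⟨k, by simp [e_apply]⟩
  · exact ⟨a, by simp [e_apply, hab.ne]⟩
  · exact ⟨a, by simp [e_apply, hab.ne]⟩

lemma neg_e_notMem (a : Fin n) : -(e a) ∉ PhiPos n := by
  intro hw
  obtain ⟨k, hk⟩ := exists_eq_one_of_mem_phiPos hw
  simp only [Pi.neg_apply, e_apply] at hk
  split_ifs at hk <;> norm_num at hk

lemma neg_add_notMem (a b : Fin n) : -(e a + e b) ∉ PhiPos n := by
  intro hw
  obtain ⟨k, hk⟩ := exists_eq_one_of_mem_phiPos hw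
  simp only [Pi.neg_apply, Pi.add_apply, e_apply] at hk
  split_ifs at hk <;> norm_num at hk

lemma e_sub_inj {a b p q : Fin n} (hab : a ≠ b) (hpq : p ≠ q)
    (h : (e a - e b : Fin n → ℝ) = e p - e q) : a = p ∧ b = q := by
  have h1 := congrFun h a
  have h2 := congrFun h b
  simp only [Pi.sub_apply, e_apply, eq_self_iff_true, if_true] at h1 h2
  rw [if_neg hab] at h1
  rw [if_neg (Ne.symm hab)] at h2
  constructor
  · by_contra hap
    rw [if_neg hap] at h1
    split_ifs at h1 <;> norm_num at h1
  · by_contra hbq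
    rw [if_neg hbq] at h2
    split_ifs at h2 <;> norm_num at h2

lemma sub_mem_phiPos_iff {a b : Fin n} (hab : a ≠ b) :
    (e a - e b) ∈ PhiPos n ↔ a < b := by
  constructor
  · rintro (⟨k, hk⟩ | ⟨p, q, hpq, h | h⟩)
    · have h1 := congrFun hk b
      simp only [Pi.sub_apply, e_apply, eq_self_iff_true, if_true] at h1
      rw [if_neg (Ne.symm hab)] at h1
      split_ifs at h1 <;> norm_num at h1
    · have h1 := congrFun h b
      simp only [Pi.sub_apply, Pi.add_apply, e_apply, eq_self_iff_true, if_true] at h1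
      rw [if_neg (Ne.symm hab)] at h1
      split_ifs at h1 <;> norm_num at h1
    · obtain ⟨rfl, rfl⟩ := e_sub_inj hab hpq.ne h
      exact hpq
  · intro h
    exact Or.inr ⟨a, b, h, Or.inr rfl⟩

lemma act_e (π : SignedPerm n) (hε : ∀ j, π.ε j = 1) (a : Fin n) :
    π.act (e a) = e (π.σ a) := by
  funext j
  simp [act, hε, e_apply, Equiv.symm_apply_eq]

lemma act_add (π : SignedPerm n) (hε : ∀ j, π.ε j = 1) (a b : Fin n) :
    π.act (e a + e b) = e (π.σ a) + e (π.σ b) := by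
  funext j
  simp [act, hε, e_apply, Equiv.symm_apply_eq]

lemma act_sub (π : SignedPerm n) (hε : ∀ j, π.ε j = 1) (a b : Fin n) :
    π.act (e a - e b) = e (π.σ a) - e (π.σ b) := by
  funext j
  simp [act, hε, e_apply, Equiv.symm_apply_eq]

lemma invi_eq_card (π : SignedPerm n) (hε : ∀ j, π.ε j = 1) (i : Fin n) :
    invi i π = #(univ.filter fun j : Fin n => i < j ∧ π.σ j < π.σ i) := by
  have hset : {v | v ∈ PhiPosI n i ∧ -(π.act v) ∈ PhiPos n}
      = (fun j => e i - e j) '' ↑(univ.filter fun j : Fin n => i < j ∧ π.σ j < π.σ i) := by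
    ext v
    constructor
    · rintro ⟨hv, hneg⟩
      rcases hv with rfl | ⟨j, hij, rfl | rfl⟩
      · rw [act_e π hε] at hneg; exact absurd hneg (neg_e_notMem _)
      · rw [act_add π hε] at hneg; exact absurd hneg (neg_add_notMem _ _)
      · rw [act_sub π hε, neg_sub] at hneg
        have hne : π.σ j ≠ π.σ i := fun h => hij.ne' (π.σ.injective h)
        have hlt := (sub_mem_phiPos_iff hne).1 hneg
        exact ⟨j, by simp [hij, hlt], rfl⟩
    · rintro ⟨j, hj, rfl⟩
      simp only [coe_filter, Set.mem_setOf_eq, mem_univ, true_and] at hj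
      refine ⟨Or.inr ⟨j, hj.1, Or.inr rfl⟩, ?_⟩
      rw [act_sub π hε, neg_sub]
      exact Or.inr ⟨π.σ j, π.σ i, hj.2, Or.inr rfl⟩
  rw [invi, hset, Set.ncard_image_of_injOn ?_, Set.ncard_coe_finset]
  intro a ha b hb h
  simp only [coe_filter, Set.mem_setOf_eq, mem_univ, true_and] at ha hb
  exact (e_sub_inj ha.1.ne hb.1.ne h).2

lemma inv_eq_card (π : SignedPerm n) (hε : ∀ j, π.ε j = 1) :
    inv π = #(univ.filter fun p : Fin n × Fin n => p.1 < p.2 ∧ π.σ p.2 < π.σ p.1) := by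
  have hset : {v | v ∈ PhiPos n ∧ -(π.act v) ∈ PhiPos n}
      = (fun p : Fin n × Fin n => e p.1 - e p.2) ''
        ↑(univ.filter fun p : Fin n × Fin n => p.1 < p.2 ∧ π.σ p.2 < π.σ p.1) := by
    ext v
    constructor
    · rintro ⟨hv, hneg⟩
      rcases hv with ⟨k, rfl⟩ | ⟨a, b, hab, rfl | rfl⟩
      · rw [act_e π hε] at hneg; exact absurd hneg (neg_e_notMem _)
      · rw [act_add π hε] at hneg; exact absurd hneg (neg_add_notMem _ _)
      · rw [act_sub π hε, neg_sub] at hneg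
        have hne : π.σ b ≠ π.σ a := fun h => hab.ne' (π.σ.injective h)
        have hlt := (sub_mem_phiPos_iff hne).1 hneg
        exact ⟨(a, b), by simp [hab, hlt], rfl⟩
    · rintro ⟨⟨a, b⟩, hab, rfl⟩
      simp only [coe_filter, Set.mem_setOf_eq, mem_univ, true_and] at hab
      refine ⟨Or.inr ⟨a, b, hab.1, Or.inr rfl⟩, ?_⟩
      rw [act_sub π hε, neg_sub]
      exact Or.inr ⟨π.σ b, π.σ a, hab.2, Or.inr rfl⟩
  rw [inv, hset, Set.ncard_image_of_injOn ?_, Set.ncard_coe_finset]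
  rintro ⟨a, b⟩ hab ⟨c, d⟩ hcd h
  simp only [coe_filter, Set.mem_setOf_eq, mem_univ, true_and] at hab hcd
  obtain ⟨rfl, rfl⟩ := e_sub_inj hab.1.ne hcd.1.ne h
  rfl

/-- The 3-cycle `a ↦ b ↦ c ↦ a`. -/
def cyc (a b c : Fin n) : Equiv.Perm (Fin n) := Equiv.swap a b * Equiv.swap b c

lemma cyc_apply (a b c : Fin n) (hab : a ≠ b) (hac : a ≠ c) (hbc : b ≠ c) (x : Fin n) :
    cyc a b c x = if x = a then b else if x = b then c else if x = c then a else x := by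
  have mul : cyc a b c x = Equiv.swap a b (Equiv.swap b c x) := Equiv.Perm.mul_apply _ _ _
  rcases eq_or_ne x a with rfl | hxa
  · rw [if_pos rfl, mul, Equiv.swap_apply_of_ne_of_ne hab hac, Equiv.swap_apply_left]
  · rw [if_neg hxa]
    rcases eq_or_ne x b with rfl | hxb
    · rw [if_pos rfl, mul, Equiv.swap_apply_left,
        Equiv.swap_apply_of_ne_of_ne hac.symm hbc.symm]
    · rw [if_neg hxb]
      rcases eq_or_ne x c with rfl | hxc
      · rw [if_pos rfl, mul, Equiv.swap_apply_right, Equiv.swap_apply_right]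
      · rw [if_neg hxc, mul, Equiv.swap_apply_of_ne_of_ne hxb hxc,
          Equiv.swap_apply_of_ne_of_ne hxa hxb]

lemma cyc_val (a b c : Fin n) (hab : a ≠ b) (hac : a ≠ c) (hbc : b ≠ c) (x : Fin n) :
    ((cyc a b c x : Fin n) : ℕ) =
      if (x : ℕ) = a then b else if (x : ℕ) = b then c else if (x : ℕ) = c then a else x := by
  rw [cyc_apply a b c hab hac hbc]
  split_ifs <;> first | rfl | (simp only [Fin.ext_iff] at *; omega)

end SignedPerm


open SignedPerm in
/-- For `i ∈ [n-2]`, the image of `invᵢ` on the alternating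
group `Aₙ` viewed inside `Bₙ` (all signs positive and `inv σ` even) is exactly
`{0, 1, …, n-i}` (position `i ∈ [n-2]` is `i.val + 1` in 1-based indexing). -/
theorem invi_image_A (n : ℕ) (hn : 3 ≤ n) (i : Fin n) (hi : i.val + 1 ≤ n - 2) :
    (fun π : SignedPerm n => invi i π) ''
        {π : SignedPerm n | (∀ j, π.ε j = 1) ∧ Even (SignedPerm.inv π)}
      = {m : ℕ | m ≤ n - (i.val + 1)} := by
  open Finset in
  · have hin : i.val + 2 < n := by omega
    ext m
    simp only [Set.mem_image, Set.mem_setOf_eq]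
    constructor
    · rintro ⟨π, ⟨hε, -⟩, rfl⟩
      show invi i π ≤ n - (i.val + 1)
      rw [invi_eq_card π hε i]
      have hsub : (univ.filter fun j : Fin n => i < j ∧ π.σ j < π.σ i) ⊆ Ioi i := by
        intro j hj
        simp only [mem_filter] at hj
        exact mem_Ioi.2 hj.2.1
      have hle := card_le_card hsub
      rw [Fin.card_Ioi] at hle
      omega
    · intro hm
      have him : i.val + m < n := by omega
      obtain rfl | rfl | h2 : m = 0 ∨ m = 1 ∨ 2 ≤ m := by omega
      · -- m = 0 : identity
        refine ⟨⟨1, fun _ => 1, fun _ => Or.inl rfl⟩, ⟨fun _ => rfl, ?_⟩, ?_⟩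
        · rw [inv_eq_card _ (fun _ => rfl)]
          have : (univ.filter fun p : Fin n × Fin n =>
              p.1 < p.2 ∧ (1 : Equiv.Perm (Fin n)) p.2 < (1 : Equiv.Perm (Fin n)) p.1) = ∅ := by
            rw [filter_eq_empty_iff]
            rintro p - ⟨h1, h2⟩
            simp only [Equiv.Perm.coe_one, id_eq] at h2
            exact absurd h2 h1.asymm
          rw [this, card_empty]
          exact Even.zero
        · show invi i _ = 0
          rw [invi_eq_card _ (fun _ => rfl)]
          rw [card_eq_zero, filter_eq_empty_iff]
          rintro j - ⟨h1, h2⟩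
          simp only [Equiv.Perm.coe_one, id_eq] at h2
          exact absurd h2 h1.asymm
      · -- m = 1 : 3-cycle i → i+1 → i+2 → i
        obtain ⟨b, hbv⟩ : ∃ b : Fin n, (b : ℕ) = i.val + 1 := ⟨⟨i.val + 1, by omega⟩, rfl⟩
        obtain ⟨c, hcv0⟩ : ∃ c : Fin n, (c : ℕ) = i.val + 2 := ⟨⟨i.val + 2, by omega⟩, rfl⟩
        have hib : i ≠ b := Fin.ne_of_val_ne (by omega)
        have hic : i ≠ c := Fin.ne_of_val_ne (by omega)
        have hbc : b ≠ c := Fin.ne_of_val_ne (by omega)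
        have hcv := cyc_val i b c hib hic hbc
        refine ⟨⟨cyc i b c, fun _ => 1, fun _ => Or.inl rfl⟩, ⟨fun _ => rfl, ?_⟩, ?_⟩
        · rw [inv_eq_card _ (fun _ => rfl)]
          have hfil : (univ.filter fun p : Fin n × Fin n =>
              p.1 < p.2 ∧ cyc i b c p.2 < cyc i b c p.1) = {(i, c), (b, c)} := by
            ext p
            obtain ⟨p1, p2⟩ := p
            simp only [mem_filter, mem_univ, true_and, mem_insert, mem_singleton,
              Prod.mk.injEq, Fin.lt_def, Fin.ext_iff, hcv]
            split_ifs <;> omega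
          rw [hfil]
          have : ((i, c) : Fin n × Fin n) ∉ ({(b, c)} : Finset (Fin n × Fin n)) := by
            simp only [mem_singleton, Prod.mk.injEq, Fin.ext_iff, not_and]
            intro h
            omega
          rw [card_insert_of_notMem this, card_singleton]
          exact ⟨1, rfl⟩
        · show invi i _ = 1
          rw [invi_eq_card _ (fun _ => rfl)]
          have hfil : (univ.filter fun j : Fin n => i < j ∧ cyc i b c j < cyc i b c i)
              = {c} := by
            ext j
            simp only [mem_filter, mem_univ, true_and, mem_singleton, Fin.lt_def,
              Fin.ext_iff, hcv]
            split_ifs <;> omega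
          rw [hfil, card_singleton]
      · -- m ≥ 2 : 3-cycle i → i+m → i+m-1 → i
        obtain ⟨b, hbv⟩ : ∃ b : Fin n, (b : ℕ) = i.val + m := ⟨⟨i.val + m, him⟩, rfl⟩
        obtain ⟨c, hcv0⟩ : ∃ c : Fin n, (c : ℕ) = i.val + m - 1 := ⟨⟨i.val + m - 1, by omega⟩, rfl⟩
        have hib : i ≠ b := Fin.ne_of_val_ne (by omega)
        have hic : i ≠ c := Fin.ne_of_val_ne (by omega)
        have hbc : b ≠ c := Fin.ne_of_val_ne (by omega)
        have hcv := cyc_val i b c hib hic hbc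
        refine ⟨⟨cyc i b c, fun _ => 1, fun _ => Or.inl rfl⟩, ⟨fun _ => rfl, ?_⟩, ?_⟩
        · rw [inv_eq_card _ (fun _ => rfl)]
          have hfil : (univ.filter fun p : Fin n × Fin n =>
              p.1 < p.2 ∧ cyc i b c p.2 < cyc i b c p.1)
              = ({i} ×ˢ Ioc i b) ∪ ((Ioo i c) ×ˢ {c}) := by
            ext p
            obtain ⟨p1, p2⟩ := p
            simp only [mem_filter, mem_univ, true_and, mem_union, mem_product,
              mem_singleton, mem_Ioc, mem_Ioo, Fin.lt_def, Fin.le_def, Fin.ext_iff, hcv]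
            split_ifs <;> omega
          have hdisj : Disjoint (({i} : Finset (Fin n)) ×ˢ Ioc i b) ((Ioo i c) ×ˢ {c}) := by
            rw [Finset.disjoint_left]
            rintro p hp1 hp2
            simp only [mem_product, mem_singleton, mem_Ioc, mem_Ioo] at hp1 hp2
            have h1 := hp1.1
            have h2 := hp2.1.1
            rw [h1] at h2
            exact absurd h2 (lt_irrefl i)
          rw [hfil, card_union_of_disjoint hdisj, card_product, card_product,
            card_singleton, card_singleton, Fin.card_Ioc, Fin.card_Ioo]
          refine ⟨m - 1, ?_⟩
          omega
        · show invi i _ = m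
          rw [invi_eq_card _ (fun _ => rfl)]
          have hfil : (univ.filter fun j : Fin n => i < j ∧ cyc i b c j < cyc i b c i)
              = Ioc i b := by
            ext j
            simp only [mem_filter, mem_univ, true_and, mem_Ioc, Fin.lt_def, Fin.le_def,
              Fin.ext_iff, hcv]
            split_ifs <;> omega
          rw [hfil, Fin.card_Ioc]
          omega
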